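/- Let X, Z_i, Z_N, Z_R be random variables taking values in finite measurable spaces on a probability space (Ω, μ), and assume the measurements are conditionally independent of the remaining measurements given the target, in the sense that I[⟨Z_i, Z_N⟩ : Z_R | X] = 0. Then the approximation error of the local utility simplifies to I[X : Z_i | Z_N] − I[X : Z_i | ⟨Z_N, Z_R⟩] = (I[X : ⟨Z_N, Z_R⟩] − I[X : Z_N] − I[X : Z_R]) + I[⟨Z_i, Z_N⟩ : Z_R]. -/

import Mathlib

/-!
Write every (conditional) mutual information as an alternating sum of joint entropies, via
`I[A : B | C] = H[A, C] + H[B, C] - H[A, B, C] - H[C]` and the chain rule. After identifying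
joint entropies of the same variables listed in different orders, the two sides differ by
`H[Zi, ZN, X] + H[ZR, X] - H[Zi, ZN, ZR, X] - H[X] = I[⟨Zi, ZN⟩ : ZR | X]`, which vanishes.
-/

open MeasureTheory ProbabilityTheory

/-- Shannon entropy of a random variable with values in a finite measurable space. -/
noncomputable def entropy {Ω S : Type*} [MeasurableSpace Ω] [Fintype S] [MeasurableSpace S]
    (X : Ω → S) (μ : Measure Ω) : ℝ :=
  ∑ x : S, Real.negMulLog ((μ.map X) {x}).toReal

/-- Conditional entropy H[X | Y]. -/
noncomputable def condEntropy {Ω S T : Type*} [MeasurableSpace Ω] [Fintype S] [MeasurableSpace S]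
    [Fintype T] [MeasurableSpace T] (X : Ω → S) (Y : Ω → T) (μ : Measure Ω) : ℝ :=
  ∑ y : T, ((μ.map Y) {y}).toReal * entropy X (ProbabilityTheory.cond μ (Y ⁻¹' {y}))

/-- Mutual information I[X : Y]. -/
noncomputable def mutualInfo {Ω S T : Type*} [MeasurableSpace Ω] [Fintype S] [MeasurableSpace S]
    [Fintype T] [MeasurableSpace T] (X : Ω → S) (Y : Ω → T) (μ : Measure Ω) : ℝ :=
  entropy X μ + entropy Y μ - entropy (fun ω => (X ω, Y ω)) μ

/-- Conditional mutual information I[X : Y | Z]. -/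
noncomputable def condMutualInfo {Ω S T U : Type*} [MeasurableSpace Ω] [Fintype S]
    [MeasurableSpace S] [Fintype T] [MeasurableSpace T] [Fintype U] [MeasurableSpace U]
    (X : Ω → S) (Y : Ω → T) (Z : Ω → U) (μ : Measure Ω) : ℝ :=
  ∑ z : U, ((μ.map Z) {z}).toReal * mutualInfo X Y (ProbabilityTheory.cond μ (Z ⁻¹' {z}))


section EntropyIdentities

variable {Ω S T U : Type*} [MeasurableSpace Ω]
  [Fintype S] [MeasurableSpace S] [MeasurableSingletonClass S]
  [Fintype T] [MeasurableSpace T] [MeasurableSingletonClass T]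
  [Fintype U] [MeasurableSpace U] [MeasurableSingletonClass U]
  {μ : Measure Ω} {W : Ω → S} {Z : Ω → T}

omit [Fintype S] [Fintype T] in
lemma map_pair_singleton_toReal [IsFiniteMeasure μ] (hW : Measurable W) (hZ : Measurable Z)
    (w : S) (z : T) :
    ((μ.map fun ω => (W ω, Z ω)) {(w, z)}).toReal
      = ((μ.map Z) {z}).toReal * (((μ[|Z ⁻¹' {z}]).map W) {w}).toReal := by
  have hpre : (fun ω => (W ω, Z ω)) ⁻¹' {(w, z)} = Z ⁻¹' {z} ∩ W ⁻¹' {w} := by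
    ext ω; simp [and_comm]
  rw [Measure.map_apply (hW.prodMk hZ) (measurableSet_singleton _), hpre,
    ← cond_mul_eq_inter (hZ (measurableSet_singleton z)),
    Measure.map_apply hZ (measurableSet_singleton _),
    Measure.map_apply hW (measurableSet_singleton _), ENNReal.toReal_mul, mul_comm]

lemma sum_map_singleton_toReal (ν : Measure Ω) [IsProbabilityMeasure ν] (hW : Measurable W) :
    ∑ w : S, ((ν.map W) {w}).toReal = 1 := by
  have := Measure.isProbabilityMeasure_map (μ := ν) hW.aemeasurable
  simpa [measureReal_def] using sum_measureReal_singleton (μ := ν.map W) Finset.univ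

theorem entropy_pair_eq_condEntropy_add [IsFiniteMeasure μ] (hW : Measurable W)
    (hZ : Measurable Z) :
    entropy (fun ω => (W ω, Z ω)) μ = condEntropy W Z μ + entropy Z μ := by
  rw [entropy, condEntropy, entropy, ← Finset.sum_add_distrib, Fintype.sum_prod_type,
    Finset.sum_comm]
  refine Finset.sum_congr rfl fun z _ => ?_
  set p := ((μ.map Z) {z}).toReal
  set q : S → ℝ := fun w => (((μ[|Z ⁻¹' {z}]).map W) {w}).toReal
  have hmass : (∑ w, q w) * Real.negMulLog p = Real.negMulLog p := by
    by_cases h0 : μ (Z ⁻¹' {z}) = 0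
    · simp [p, Measure.map_apply hZ (measurableSet_singleton _), h0]
    · have := cond_isProbabilityMeasure (μ := μ) h0
      rw [sum_map_singleton_toReal _ hW, one_mul]
  calc ∑ w, Real.negMulLog ((μ.map fun ω => (W ω, Z ω)) {(w, z)}).toReal
      = ∑ w, (q w * Real.negMulLog p + p * Real.negMulLog (q w)) := by
        simp only [map_pair_singleton_toReal hW hZ, Real.negMulLog_mul, p, q]
    _ = p * entropy W (μ[|Z ⁻¹' {z}]) + Real.negMulLog p := by
        rw [Finset.sum_add_distrib, ← Finset.sum_mul, hmass, ← Finset.mul_sum, entropy]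
        ring

omit [MeasurableSingletonClass S] [MeasurableSingletonClass T] [MeasurableSingletonClass U] in
lemma condMutualInfo_eq_condEntropy (X : Ω → S) (Y : Ω → T) (Z : Ω → U) :
    condMutualInfo X Y Z μ
      = condEntropy X Z μ + condEntropy Y Z μ - condEntropy (fun ω => (X ω, Y ω)) Z μ := by
  simp only [condMutualInfo, condEntropy, mutualInfo, mul_add, mul_sub, Finset.sum_sub_distrib,
    Finset.sum_add_distrib]

theorem condMutualInfo_eq_entropy [IsFiniteMeasure μ] {X : Ω → S} {Y : Ω → T} {Z : Ω → U}
    (hX : Measurable X) (hY : Measurable Y) (hZ : Measurable Z) :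
    condMutualInfo X Y Z μ
      = entropy (fun ω => (X ω, Z ω)) μ + entropy (fun ω => (Y ω, Z ω)) μ
        - entropy (fun ω => ((X ω, Y ω), Z ω)) μ - entropy Z μ := by
  rw [condMutualInfo_eq_condEntropy, entropy_pair_eq_condEntropy_add hX hZ,
    entropy_pair_eq_condEntropy_add hY hZ, entropy_pair_eq_condEntropy_add (hX.prodMk hY) hZ]
  ring

theorem entropy_comp_of_injective (hW : Measurable W) {f : S → T} (hf : Function.Injective f) :
    entropy (f ∘ W) μ = entropy W μ := by
  have hmap : ∀ t, (μ.map (f ∘ W)) {t} = (μ.map W) (f ⁻¹' {t}) := fun t => by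
    rw [← Measure.map_map (measurable_of_countable f) hW,
      Measure.map_apply (measurable_of_countable f) (measurableSet_singleton t)]
  refine (Fintype.sum_of_injective f hf _ _ (fun t ht => ?_) fun w => ?_).symm
  · rw [hmap, Set.preimage_singleton_eq_empty.mpr ht]; simp
  · rw [hmap, ← Set.image_singleton, hf.preimage_image]

end EntropyIdentities

/-- Remark 1: if the measurements are conditionally independent of the remaining measurements
given the target, i.e. `I[⟨Zi, ZN⟩ : ZR | X] = 0`, the approximation error simplifies to
`I[X : Zi | ZN] − I[X : Zi | ⟨ZN, ZR⟩]
  = (I[X : ⟨ZN, ZR⟩] − I[X : ZN] − I[X : ZR]) + I[⟨Zi, ZN⟩ : ZR]`. -/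
theorem approx_local_utility_error_cond_indep
    {Ω 𝒳 𝒵i 𝒵N 𝒵R : Type*} [MeasurableSpace Ω]
    [Fintype 𝒳] [MeasurableSpace 𝒳] [MeasurableSingletonClass 𝒳]
    [Fintype 𝒵i] [MeasurableSpace 𝒵i] [MeasurableSingletonClass 𝒵i]
    [Fintype 𝒵N] [MeasurableSpace 𝒵N] [MeasurableSingletonClass 𝒵N]
    [Fintype 𝒵R] [MeasurableSpace 𝒵R] [MeasurableSingletonClass 𝒵R]
    (μ : Measure Ω) [IsProbabilityMeasure μ]
    (X : Ω → 𝒳) (Zi : Ω → 𝒵i) (ZN : Ω → 𝒵N) (ZR : Ω → 𝒵R)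
    (hX : Measurable X) (hZi : Measurable Zi) (hZN : Measurable ZN) (hZR : Measurable ZR)
    (hindep : condMutualInfo (fun ω => (Zi ω, ZN ω)) ZR X μ = 0) :
    condMutualInfo X Zi ZN μ - condMutualInfo X Zi (fun ω => (ZN ω, ZR ω)) μ
      = (mutualInfo X (fun ω => (ZN ω, ZR ω)) μ - mutualInfo X ZN μ - mutualInfo X ZR μ)
        + mutualInfo (fun ω => (Zi ω, ZN ω)) ZR μ := by
  have hXiN : entropy (fun ω => ((Zi ω, ZN ω), X ω)) μ
      = entropy (fun ω => ((X ω, Zi ω), ZN ω)) μ :=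
    entropy_comp_of_injective ((hX.prodMk hZi).prodMk hZN)
      ((Equiv.prodAssoc _ _ _).trans (Equiv.prodComm _ _)).injective
  have hXR : entropy (fun ω => (ZR ω, X ω)) μ = entropy (fun ω => (X ω, ZR ω)) μ :=
    entropy_comp_of_injective (hX.prodMk hZR) Prod.swap_injective
  have hXiNR : entropy (fun ω => (((Zi ω, ZN ω), ZR ω), X ω)) μ
      = entropy (fun ω => ((X ω, Zi ω), (ZN ω, ZR ω))) μ :=
    entropy_comp_of_injective ((hX.prodMk hZi).prodMk (hZN.prodMk hZR))
      (f := fun p => (((p.1.2, p.2.1), p.2.2), p.1.1))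
      (Function.LeftInverse.injective (g := fun q => ((q.2, q.1.1.1), (q.1.1.2, q.1.2)))
        fun _ => rfl)
  have hiNR : entropy (fun ω => (Zi ω, (ZN ω, ZR ω))) μ
      = entropy (fun ω => ((Zi ω, ZN ω), ZR ω)) μ :=
    entropy_comp_of_injective ((hZi.prodMk hZN).prodMk hZR)
      (f := fun p => (p.1.1, (p.1.2, p.2)))
      (Function.LeftInverse.injective (g := fun q => ((q.1, q.2.1), q.2.2)) fun _ => rfl)
  rw [condMutualInfo_eq_entropy (hZi.prodMk hZN) hZR hX] at hindep
  rw [condMutualInfo_eq_entropy hX hZi hZN, condMutualInfo_eq_entropy hX hZi (hZN.prodMk hZR)]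
  simp only [mutualInfo]
  linarith
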